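/- arXiv:1412.3839 — 3 statements merged into one kernel-verified Lean document; each statement's English description precedes it below -/
import Mathlib

section
/- Let D and D_n (n ∈ ℕ) be simply connected open subsets of ℂ, all different from ℂ, all containing 0, such that D_{n+1} ⊆ D_n for every n and D ⊆ D_n for every n. For each n let f_n : 𝕌 → D_n be a holomorphic bijection from the open unit disc onto D_n with f_n(0) = 0 and f_n'(0) > 0, and let f : 𝕌 → D be a holomorphic bijection with f(0) = 0 and f'(0) > 0. Then f_n converges to f uniformly on compact subsets of 𝕌 (i.e., D_n converges to D in the Carathéodory topology seen from 0) if and only if f_n'(0) converges to f'(0) (i.e., the conformal radii CR(D_n; 0) converge to CR(D; 0)). -/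
open Set Filter Complex
open scoped Topology

noncomputable section

/-- For a function vanishing at `0`, `F w = w * dslope F 0 w`. -/
lemma dslope_zero_mul (F : ℂ → ℂ) (hF : F 0 = 0) (w : ℂ) : F w = w * dslope F 0 w := by
  rcases eq_or_ne w 0 with rfl | hw
  · simp [hF]
  · rw [dslope_of_ne _ hw, slope_def_field]
    field_simp [hF]
    rw [hF, sub_zero, sub_zero]; ring

/-- Schwarz: a self-map of the disc fixing 0 contracts norms. -/
lemma schwarz_norm_le {h : ℂ → ℂ} (hd : DifferentiableOn ℂ h (Metric.ball 0 1))
    (hm : Set.MapsTo h (Metric.ball 0 1) (Metric.ball 0 1)) (h0 : h 0 = 0)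
    {z : ℂ} (hz : z ∈ Metric.ball (0:ℂ) 1) : ‖h z‖ ≤ ‖z‖ := by
  have hm' : Set.MapsTo h (Metric.ball 0 1) (Metric.ball (h 0) 1) := by rwa [h0]
  have := Complex.norm_dslope_le_div_of_mapsTo_ball hd (hm'.mono_right Metric.ball_subset_closedBall) hz
  rw [dslope_zero_mul h h0 z, norm_mul]
  calc ‖z‖ * ‖dslope h 0 z‖ ≤ ‖z‖ * 1 := by
        refine mul_le_mul_of_nonneg_left ?_ (norm_nonneg _)
        simpa using this
    _ = ‖z‖ := mul_one _

lemma schwarz_quant {h : ℂ → ℂ} (hd : DifferentiableOn ℂ h (Metric.ball 0 1))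
    (hm : Set.MapsTo h (Metric.ball 0 1) (Metric.ball 0 1)) (h0 : h 0 = 0)
    {a : ℝ} (ha : deriv h 0 = (a : ℂ)) (ha0 : 0 < a) (ha1 : a ≤ 1)
    {ρ : ℝ} (hρ : ρ < 1) {z : ℂ} (hz1 : z ∈ Metric.ball (0:ℂ) 1) (hz : ‖z‖ ≤ ρ) :
    ‖h z - z‖ ≤ (1 - a) * (1 + 2 / (1 - ρ)) := by
  have hm' : Set.MapsTo h (Metric.ball 0 1) (Metric.ball (h 0) 1) := by rwa [h0]
  set q : ℂ → ℂ := dslope h 0 with hqdef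
  have hz0 : (0:ℂ) ∈ Metric.ball (0:ℂ) 1 := Metric.mem_ball_self one_pos
  have hq_diff : DifferentiableOn ℂ q (Metric.ball 0 1) :=
    (differentiableOn_dslope (Metric.ball_mem_nhds _ one_pos)).mpr hd
  have hq_le : ∀ w ∈ Metric.ball (0:ℂ) 1, ‖q w‖ ≤ 1 := fun w hw => by
    simpa using Complex.norm_dslope_le_div_of_mapsTo_ball hd (hm'.mono_right Metric.ball_subset_closedBall) hw
  have hq0 : q 0 = (a : ℂ) := by rw [hqdef, dslope_same]; exact ha
  have hznorm1 : ‖z‖ < 1 := lt_of_le_of_lt hz hρ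
  have hρ0 : 0 ≤ ρ := le_trans (norm_nonneg z) hz
  rcases eq_or_lt_of_le ha1 with haeq | halt
  · -- a = 1
    subst haeq
    have h_eq : ‖dslope h 0 0‖ = 1 / 1 := by rw [dslope_same, ha]; norm_num
    have haff := Complex.affine_of_mapsTo_ball_of_exists_norm_dslope_eq_div hd (hm'.mono_right Metric.ball_subset_closedBall) hz0 h_eq hz1
    simp only [h0, dslope_same, ha, sub_zero, smul_eq_mul, zero_add, Complex.ofReal_one,
      mul_one] at haff
    rw [haff, sub_self, norm_zero]
    norm_num
  · -- a < 1
    have hden : ∀ w ∈ Metric.ball (0:ℂ) 1, (1 : ℂ) - (a:ℂ) * q w ≠ 0 := by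
      intro w hw hcon
      have h1 : ‖(a:ℂ) * q w‖ ≤ a := by
        rw [norm_mul, Complex.norm_real, Real.norm_eq_abs, abs_of_pos ha0]
        calc a * ‖q w‖ ≤ a * 1 := mul_le_mul_of_nonneg_left (hq_le w hw) ha0.le
          _ = a := mul_one a
      have h2 : (1:ℂ) = (a:ℂ) * q w := by linear_combination hcon
      rw [← h2] at h1
      simp at h1; linarith
    set ψ : ℂ → ℂ := fun w => ((a:ℂ) - q w) / (1 - (a:ℂ) * q w) with hψdef
    have hψd : DifferentiableOn ℂ ψ (Metric.ball 0 1) :=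
      DifferentiableOn.div ((differentiableOn_const _).sub hq_diff)
        ((differentiableOn_const _).sub ((differentiableOn_const _).mul hq_diff)) hden
    have hψ0 : ψ 0 = 0 := by simp [hψdef, hq0]
    have hψle : ∀ w ∈ Metric.ball (0:ℂ) 1, ‖ψ w‖ ≤ 1 := by
      intro w hw
      have hnum : ‖(a:ℂ) - q w‖ ≤ ‖(1:ℂ) - (a:ℂ) * q w‖ := by
        have hu : (q w).re ^ 2 + (q w).im ^ 2 ≤ 1 := by
          have h2 : ‖q w‖ ^ 2 ≤ 1 := by nlinarith [norm_nonneg (q w), hq_le w hw]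
          rwa [Complex.sq_norm, Complex.normSq_apply, ← pow_two, ← pow_two]
            at h2
        have hsq : ‖(a:ℂ) - q w‖ ^ 2 ≤ ‖(1:ℂ) - (a:ℂ) * q w‖ ^ 2 := by
          rw [Complex.sq_norm, Complex.sq_norm,
            Complex.normSq_apply, Complex.normSq_apply]
          simp only [Complex.sub_re, Complex.sub_im, Complex.mul_re, Complex.mul_im,
            Complex.ofReal_re, Complex.ofReal_im, Complex.one_re, Complex.one_im]
          nlinarith [mul_nonneg (by nlinarith : (0:ℝ) ≤ 1 - a^2)
            (by linarith : (0:ℝ) ≤ 1 - ((q w).re^2 + (q w).im^2))]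
        exact (pow_le_pow_iff_left₀ (norm_nonneg _) (norm_nonneg _) two_ne_zero).mp hsq
      rw [hψdef]
      simp only []
      rw [norm_div]
      exact div_le_one_of_le₀ hnum (norm_nonneg _)
    -- ‖ψ z‖ ≤ ‖z‖ via Schwarz with radius 1+ε
    have hψz : ‖ψ z‖ ≤ ‖z‖ := by
      have hds : ‖dslope ψ 0 z‖ ≤ 1 := by
        refine le_of_forall_pos_le_add fun ε hε => ?_
        have hmψ : Set.MapsTo ψ (Metric.ball 0 1) (Metric.ball (ψ 0) (1 + ε)) := by
          intro w hw
          rw [hψ0, Metric.mem_ball, dist_zero_right]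
          exact lt_of_le_of_lt (hψle w hw) (by linarith)
        have := Complex.norm_dslope_le_div_of_mapsTo_ball hψd (hmψ.mono_right Metric.ball_subset_closedBall) hz1
        simpa using this
      calc ‖ψ z‖ = ‖z‖ * ‖dslope ψ 0 z‖ := by rw [← norm_mul, ← dslope_zero_mul ψ hψ0 z]
        _ ≤ ‖z‖ * 1 := mul_le_mul_of_nonneg_left hds (norm_nonneg _)
        _ = ‖z‖ := mul_one _
    -- algebra
    set t := ‖(a:ℂ) - q z‖ with htdef
    have ht0 : 0 ≤ t := norm_nonneg _
    have hkey : (a:ℂ) - q z = ψ z * (1 - (a:ℂ) * q z) := by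
      rw [hψdef]; field_simp [hden z hz1]
    have hsplit : ‖(1:ℂ) - (a:ℂ) * q z‖ ≤ (1 - a^2) + a * t := by
      have : (1:ℂ) - (a:ℂ) * q z = ((1 - a^2 : ℝ) : ℂ) + (a:ℂ) * ((a:ℂ) - q z) := by
        push_cast; ring
      rw [this]
      calc ‖((1 - a^2 : ℝ) : ℂ) + (a:ℂ) * ((a:ℂ) - q z)‖
          ≤ ‖((1 - a^2 : ℝ) : ℂ)‖ + ‖(a:ℂ) * ((a:ℂ) - q z)‖ := norm_add_le _ _
        _ = (1 - a^2) + a * t := by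
            rw [norm_mul, Complex.norm_real, Complex.norm_real, Real.norm_eq_abs,
              Real.norm_eq_abs, _root_.abs_of_pos ha0,
              _root_.abs_of_nonneg (by nlinarith : (0:ℝ) ≤ 1 - a^2)]
    have hineq : t ≤ ρ * ((1 - a^2) + a * t) := by
      calc t = ‖ψ z * (1 - (a:ℂ) * q z)‖ := by rw [htdef, hkey]
        _ = ‖ψ z‖ * ‖(1:ℂ) - (a:ℂ) * q z‖ := norm_mul _ _
        _ ≤ ρ * ((1 - a^2) + a * t) := by
            apply mul_le_mul (le_trans hψz hz) hsplit (norm_nonneg _) hρ0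
    have ht_bound : t ≤ 2 * (1 - a) / (1 - ρ) := by
      have h1 : t * (1 - ρ) ≤ ρ * (1 - a^2) := by
        nlinarith [mul_nonneg (mul_nonneg hρ0 ht0) (by linarith : (0:ℝ) ≤ 1 - a)]
      have h2 : ρ * (1 - a^2) ≤ 2 * (1 - a) := by
        nlinarith [mul_nonneg (by linarith : (0:ℝ) ≤ 1 - ρ) (by nlinarith : (0:ℝ) ≤ 1 - a^2),
          sq_nonneg (1 - a)]
      rw [le_div_iff₀ (by linarith : (0:ℝ) < 1 - ρ)]
      linarith
    -- conclude
    have hfin : ‖h z - z‖ ≤ ‖q z - 1‖ := by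
      have : h z - z = z * (q z - 1) := by
        rw [dslope_zero_mul h h0 z]; ring
      rw [this, norm_mul]
      calc ‖z‖ * ‖q z - 1‖ ≤ 1 * ‖q z - 1‖ :=
            mul_le_mul_of_nonneg_right hznorm1.le (norm_nonneg _)
        _ = ‖q z - 1‖ := one_mul _
    have hq1 : ‖q z - 1‖ ≤ t + (1 - a) := by
      have hna : ‖(1:ℂ) - (a:ℂ)‖ = 1 - a := by
        rw [show (1:ℂ) - (a:ℂ) = ((1 - a : ℝ) : ℂ) by push_cast; ring, Complex.norm_real,
          Real.norm_eq_abs, _root_.abs_of_nonneg (by linarith)]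
      have hsplit2 : q z - 1 = -(((a:ℂ) - q z)) - ((1:ℂ) - (a:ℂ)) := by ring
      rw [hsplit2]
      calc ‖-(((a:ℂ) - q z)) - ((1:ℂ) - (a:ℂ))‖ ≤ ‖-(((a:ℂ) - q z))‖ + ‖(1:ℂ) - (a:ℂ)‖ :=
            norm_sub_le _ _
        _ = t + (1 - a) := by rw [norm_neg, hna]
    calc ‖h z - z‖ ≤ t + (1 - a) := le_trans hfin hq1
      _ ≤ 2 * (1 - a) / (1 - ρ) + (1 - a) := by linarith
      _ = (1 - a) * (1 + 2 / (1 - ρ)) := by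
          have hne : (1:ℝ) - ρ ≠ 0 := by linarith
          field_simp
          ring

/-- An injective holomorphic function on an open set has nonvanishing derivative. -/
lemma deriv_ne_zero_of_injOn {s : Set ℂ} (hs : IsOpen s) {f : ℂ → ℂ}
    (hd : DifferentiableOn ℂ f s) (hinj : Set.InjOn f s) {a : ℂ} (ha : a ∈ s) :
    deriv f a ≠ 0 := by
  intro hda
  have han : AnalyticOnNhd ℂ f s := hd.analyticOnNhd hs
  have hfa : AnalyticAt ℂ (fun z => f z - f a) a := (han a ha).sub analyticAt_const
  -- f - f a is not eventually zero
  have hnev : ¬ ∀ᶠ z in 𝓝 a, f z - f a = 0 := by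
    intro hev
    have h1 : ∀ᶠ z in 𝓝[≠] a, (z ∈ s ∧ f z - f a = 0) :=
      (((hs.eventually_mem ha).and hev)).filter_mono nhdsWithin_le_nhds
    have h2 : ∀ᶠ z in 𝓝[≠] a, z ≠ a := eventually_mem_nhdsWithin
    obtain ⟨z, ⟨hzs, hz0⟩, hzne⟩ := (h1.and h2).exists
    exact hzne (hinj hzs ha (by linear_combination hz0))
  have hne_top : analyticOrderAt (fun z => f z - f a) a ≠ ⊤ := fun h => hnev (analyticOrderAt_eq_top.mp h)
  obtain ⟨m, hm⟩ : ∃ m : ℕ, (m : ℕ∞) = analyticOrderAt (fun z => f z - f a) a := WithTop.ne_top_iff_exists.mp hne_top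
  obtain ⟨g, hg_an, hg0, hev⟩ := (hfa.analyticOrderAt_eq_natCast).mp hm.symm
  -- m ≠ 0
  have hm0 : m ≠ 0 := by
    rintro rfl
    have := hev.self_of_nhds
    simp at this
    exact hg0 this.symm
  -- m ≠ 1
  have hm1 : m ≠ 1 := by
    rintro rfl
    have hder : HasDerivAt (fun z => (z - a) ^ 1 • g z) (g a) a := by
      have h1 : HasDerivAt (fun z => (z : ℂ) - a) 1 a := (hasDerivAt_id a).sub_const a
      have h2 : HasDerivAt g (deriv g a) a := hg_an.differentiableAt.hasDerivAt
      have := h1.mul h2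
      have e : (fun z => (z - a) ^ 1 • g z) = (fun z => z - a) * g := by funext z; simp
      rw [e]
      exact this.congr_deriv (by simp)
    have hde : deriv (fun z => f z - f a) a = g a := by
      rw [Filter.EventuallyEq.deriv_eq hev]
      exact hder.deriv
    rw [deriv_sub_const, hda] at hde
    exact hg0 hde.symm
  have hm2 : 2 ≤ m := by omega
  -- m-th root of g near a
  set c : ℂ := g a ^ ((m : ℂ)⁻¹) with hcdef
  have hcm : c ^ m = g a := Complex.cpow_nat_inv_pow _ hm0
  have hc0 : c ≠ 0 := by
    intro h
    rw [h] at hcm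
    simp [zero_pow hm0] at hcm
    exact hg0 hcm.symm
  set v : ℂ → ℂ := fun z => c * Complex.exp (Complex.log (g z / g a) / m) with hvdef
  set φ : ℂ → ℂ := fun z => (z - a) * v z with hφdef
  have hgga : AnalyticAt ℂ (fun z => g z / g a) a := hg_an.div analyticAt_const hg0
  have hlog : AnalyticAt ℂ (fun z => Complex.log (g z / g a)) a := by
    apply (analyticAt_clog ?_).comp hgga
    rw [div_self hg0]
    exact Complex.one_mem_slitPlane
  have hv_an : AnalyticAt ℂ v a :=
    analyticAt_const.mul (analyticAt_cexp.comp ((hlog.div analyticAt_const (by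
      exact_mod_cast Nat.cast_ne_zero.mpr hm0))))
  have hφ_an : AnalyticAt ℂ φ a := ((analyticAt_id.sub analyticAt_const).mul hv_an)
  have hva : v a = c := by
    rw [hvdef]
    simp [div_self hg0, Complex.log_one]
  -- f z = f a + φ z ^ m eventually
  have hgne : ∀ᶠ z in 𝓝 a, g z ≠ 0 := hg_an.continuousAt.eventually_ne hg0
  have hφeq : ∀ᶠ z in 𝓝 a, f z = f a + φ z ^ m := by
    filter_upwards [hev, hgne] with z hz hgz
    have hexp : Complex.exp (Complex.log (g z / g a) / m) ^ m = g z / g a := by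
      rw [← Complex.exp_nat_mul]
      rw [mul_div_cancel₀ _ (by exact_mod_cast Nat.cast_ne_zero.mpr hm0 : (m:ℂ) ≠ 0)]
      exact Complex.exp_log (div_ne_zero hgz hg0)
    have : φ z ^ m = (z - a) ^ m * g z := by
      rw [hφdef]
      simp only []
      rw [mul_pow, hvdef]
      simp only []
      rw [mul_pow, hexp, hcm]
      field_simp
    rw [this]
    simp only [smul_eq_mul] at hz
    linear_combination hz
  -- φ has strict derivative c ≠ 0 at a
  have hφd : HasDerivAt φ c a := by
    have h1 : HasDerivAt (fun z => (z : ℂ) - a) 1 a := (hasDerivAt_id a).sub_const a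
    have h2 : HasDerivAt v (deriv v a) a := hv_an.differentiableAt.hasDerivAt
    have := h1.mul h2
    simp only [one_mul, sub_self, zero_mul, add_zero] at this
    rw [hva] at this
    exact this
  obtain ⟨p, hp⟩ := hφ_an
  have hstrict : HasStrictDerivAt φ c a := by
    have h := hp.hasStrictDerivAt
    rwa [h.hasDerivAt.unique hφd] at h
  have hmap : Filter.map φ (𝓝 a) = 𝓝 0 := by
    have := hstrict.map_nhds_eq hc0
    rwa [show φ a = 0 by simp [hφdef]] at this
  -- the punchline
  have hU : {z | z ∈ s ∧ f z = f a + φ z ^ m} ∈ 𝓝 a := (hs.eventually_mem ha).and hφeq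
  have himg : φ '' {z | z ∈ s ∧ f z = f a + φ z ^ m} ∈ 𝓝 (0:ℂ) := by
    rw [← hmap]
    exact Filter.image_mem_map hU
  obtain ⟨δ, hδ0, hδ⟩ := Metric.mem_nhds_iff.mp himg
  set ζ : ℂ := Complex.exp (2 * Real.pi * Complex.I / m) with hζdef
  have hmC : (m : ℂ) ≠ 0 := Nat.cast_ne_zero.mpr hm0
  have hζm : ζ ^ m = 1 := by
    rw [hζdef, ← Complex.exp_nat_mul, mul_div_cancel₀ _ hmC]
    exact Complex.exp_two_pi_mul_I
  have hζ1 : ζ ≠ 1 := by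
    rw [hζdef]
    intro h
    obtain ⟨k, hk⟩ := Complex.exp_eq_one_iff.mp h
    have h2 : 2 * (Real.pi:ℂ) * Complex.I = ↑k * (2 * (Real.pi:ℂ) * Complex.I) * m :=
      (div_eq_iff hmC).mp hk
    have hpi : (2 * (Real.pi:ℂ) * Complex.I) ≠ 0 := by
      simp [Real.pi_ne_zero, Complex.I_ne_zero]
    have h3 : (1 : ℂ) = ↑k * ↑m := by
      have h4 : (2 * (Real.pi:ℂ) * Complex.I) * 1 = (2 * (Real.pi:ℂ) * Complex.I) * (↑k * ↑m) := by
        linear_combination h2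
      exact mul_left_cancel₀ hpi h4
    have h4 : (k * m : ℤ) = 1 := by exact_mod_cast h3.symm
    have h5 : (m : ℤ) ∣ 1 := Dvd.intro_left k h4
    have := Int.le_of_dvd one_pos h5
    omega
  have hζabs : ‖ζ‖ = 1 := by
    rw [hζdef, Complex.norm_exp]
    have : (2 * Real.pi * Complex.I / m).re = 0 := by
      simp [Complex.div_re]
    rw [this, Real.exp_zero]
  -- two distinct preimages
  have hw1 : ((δ/2 : ℝ) : ℂ) ∈ Metric.ball (0:ℂ) δ := by
    rw [Metric.mem_ball, dist_zero_right, Complex.norm_real, Real.norm_eq_abs,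
      _root_.abs_of_pos (by linarith)]
    linarith
  have hw2 : ζ * ((δ/2 : ℝ) : ℂ) ∈ Metric.ball (0:ℂ) δ := by
    rw [Metric.mem_ball, dist_zero_right, norm_mul, hζabs, one_mul, Complex.norm_real,
      Real.norm_eq_abs, _root_.abs_of_pos (by linarith)]
    linarith
  obtain ⟨z₁, hz₁, hφz₁⟩ := hδ hw1
  obtain ⟨z₂, hz₂, hφz₂⟩ := hδ hw2
  have hfz : f z₁ = f z₂ := by
    rw [hz₁.2, hz₂.2, hφz₁, hφz₂, mul_pow, hζm, one_mul]
  have hz12 : z₁ = z₂ := hinj hz₁.1 hz₂.1 hfz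
  rw [hz12, hφz₂] at hφz₁
  have hδne : ((δ/2 : ℝ) : ℂ) ≠ 0 := by
    simp only [ne_eq, Complex.ofReal_eq_zero]
    linarith
  have hfinal : ζ * ((δ/2 : ℝ) : ℂ) = 1 * ((δ/2 : ℝ) : ℂ) := by rw [one_mul]; exact hφz₁
  exact hζ1 (mul_right_cancel₀ hδne hfinal)

/-- The inverse of a holomorphic bijection of the unit disc onto `U` is holomorphic. -/
lemma exists_holo_inverse {U : Set ℂ} {f : ℂ → ℂ}
    (hd : DifferentiableOn ℂ f (Metric.ball 0 1))
    (hbij : Set.BijOn f (Metric.ball (0:ℂ) 1) U) :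
    ∃ g : ℂ → ℂ, (∀ z ∈ Metric.ball (0:ℂ) 1, g (f z) = z) ∧
      Set.MapsTo g U (Metric.ball (0:ℂ) 1) ∧ (∀ w ∈ U, f (g w) = w) ∧
      (∀ w ∈ U, HasDerivAt g (deriv f (g w))⁻¹ w) := by
  have hinj := hbij.injOn
  have himage : f '' Metric.ball (0:ℂ) 1 = U := hbij.image_eq
  set g : ℂ → ℂ := Function.invFunOn f (Metric.ball (0:ℂ) 1) with hgdef
  have hleft : ∀ z ∈ Metric.ball (0:ℂ) 1, g (f z) = z := fun z hz =>
    hinj.leftInvOn_invFunOn hz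
  have hex : ∀ w ∈ U, ∃ z ∈ Metric.ball (0:ℂ) 1, f z = w := by
    intro w hw
    obtain ⟨z, hz, hfz⟩ := hbij.surjOn hw
    exact ⟨z, hz, hfz⟩
  have hgmem : Set.MapsTo g U (Metric.ball (0:ℂ) 1) := fun w hw =>
    Function.invFunOn_mem (hex w hw)
  have hfg : ∀ w ∈ U, f (g w) = w := fun w hw => Function.invFunOn_eq (hex w hw)
  -- images of open subsets are open
  have hopen : ∀ t ⊆ Metric.ball (0:ℂ) 1, IsOpen t → IsOpen (f '' t) := by
    have := (hd.analyticOnNhd Metric.isOpen_ball).is_constant_or_isOpen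
      (convex_ball (0:ℂ) 1).isPreconnected
    rcases this with ⟨w, hw⟩ | h
    · exfalso
      have h0 : (0:ℂ) ∈ Metric.ball (0:ℂ) 1 := Metric.mem_ball_self one_pos
      have h2 : (1/2 : ℂ) ∈ Metric.ball (0:ℂ) 1 := by
        rw [Metric.mem_ball, dist_zero_right]
        norm_num
      have := hinj h0 h2 (by rw [hw 0 h0, hw (1/2) h2])
      norm_num at this
    · exact fun t ht hto => h t ht hto
  have hUopen : IsOpen U := by
    rw [← himage]
    exact hopen _ subset_rfl Metric.isOpen_ball
  -- continuity of g on U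
  have hgc : ∀ w ∈ U, ContinuousAt g w := by
    intro w hw
    rw [continuousAt_def]
    intro A hA
    obtain ⟨t, htA, ht_open, hzt⟩ := mem_nhds_iff.mp hA
    have hV : IsOpen (f '' (t ∩ Metric.ball (0:ℂ) 1)) :=
      hopen _ inter_subset_right (ht_open.inter Metric.isOpen_ball)
    have hwV : w ∈ f '' (t ∩ Metric.ball (0:ℂ) 1) :=
      ⟨g w, ⟨hzt, hgmem hw⟩, hfg w hw⟩
    refine Filter.mem_of_superset (hV.mem_nhds hwV) ?_
    rintro y ⟨z', ⟨hz't, hz'b⟩, rfl⟩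
    rw [Set.mem_preimage, hleft z' hz'b]
    exact htA hz't
  refine ⟨g, hleft, hgmem, hfg, fun w hw => ?_⟩
  have hder : HasDerivAt f (deriv f (g w)) (g w) :=
    (hd.differentiableAt (Metric.isOpen_ball.mem_nhds (hgmem hw))).hasDerivAt
  exact HasDerivAt.of_local_left_inverse (hgc w hw) hder
    (deriv_ne_zero_of_injOn Metric.isOpen_ball hd hinj (hgmem hw))
    (by filter_upwards [hUopen.eventually_mem hw] with y hy; exact hfg y hy)

/-- Carathéodory convergence for a decreasing sequence of simply connected domains
containing a fixed domain: the normalized Riemann maps `f_n` converge locally uniformly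
(uniformly on compact sets) to the normalized Riemann map `f` of `D` if and only if the
conformal radii `f_n'(0) = CR(D_n; 0)` converge to `f'(0) = CR(D; 0)`. -/
theorem caratheodory_convergence_iff_conformal_radius
    (D : Set ℂ) (Dn : ℕ → Set ℂ)
    (hDopen : IsOpen D) (hDsc : SimplyConnectedSpace ↥D)
    (hDne : D ≠ Set.univ) (hD0 : (0 : ℂ) ∈ D)
    (hDnopen : ∀ n, IsOpen (Dn n)) (hDnsc : ∀ n, SimplyConnectedSpace ↥(Dn n))
    (hDnne : ∀ n, Dn n ≠ Set.univ) (hDn0 : ∀ n, (0 : ℂ) ∈ Dn n)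
    (hdecr : ∀ n, Dn (n + 1) ⊆ Dn n) (hsub : ∀ n, D ⊆ Dn n)
    (f : ℂ → ℂ) (fn : ℕ → ℂ → ℂ)
    (hfbij : Set.BijOn f (Metric.ball (0 : ℂ) 1) D)
    (hfholo : DifferentiableOn ℂ f (Metric.ball (0 : ℂ) 1))
    (hf0 : f 0 = 0)
    (hf' : 0 < (deriv f 0).re ∧ (deriv f 0).im = 0)
    (hfnbij : ∀ n, Set.BijOn (fn n) (Metric.ball (0 : ℂ) 1) (Dn n))
    (hfnholo : ∀ n, DifferentiableOn ℂ (fn n) (Metric.ball (0 : ℂ) 1))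
    (hfn0 : ∀ n, fn n 0 = 0)
    (hfn' : ∀ n, 0 < (deriv (fn n) 0).re ∧ (deriv (fn n) 0).im = 0) :
    (∀ K : Set ℂ, K ⊆ Metric.ball (0 : ℂ) 1 → IsCompact K →
        TendstoUniformlyOn (fun n => fn n) f atTop K)
      ↔ Tendsto (fun n => deriv (fn n) 0) atTop (nhds (deriv f 0)) := by
  have h0ball : (0:ℂ) ∈ Metric.ball (0:ℂ) 1 := Metric.mem_ball_self one_pos
  constructor
  · -- easy direction
    intro H
    have hloc : TendstoLocallyUniformlyOn (fun n => fn n) f atTop (Metric.ball 0 1) :=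
      (tendstoLocallyUniformlyOn_iff_forall_isCompact Metric.isOpen_ball).mpr
        (fun K hK1 hK2 => H K hK1 hK2)
    have hder := hloc.deriv (Filter.Eventually.of_forall hfnholo) Metric.isOpen_ball
    exact hder.tendsto_at h0ball
  · -- hard direction
    intro H K hK1 hK2
    rcases K.eq_empty_or_nonempty with rfl | hKne
    · exact tendstoUniformlyOn_empty
    set r : ℝ := (deriv f 0).re with hrdef
    have hr : 0 < r := hf'.1
    have hc : deriv f 0 = (r : ℂ) := by
      apply Complex.ext <;> simp [hrdef, hf'.2]
    set rn : ℕ → ℝ := fun n => (deriv (fn n) 0).re with hrndef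
    have hrn : ∀ n, 0 < rn n := fun n => (hfn' n).1
    have hcn : ∀ n, deriv (fn n) 0 = ((rn n : ℝ) : ℂ) := by
      intro n
      apply Complex.ext <;> simp [hrndef, (hfn' n).2]
    -- inverses
    have hinv := fun n => exists_holo_inverse (hfnholo n) (hfnbij n)
    choose gn hgleft hgmaps hgright hgderiv using hinv
    have hgn0 : ∀ n, gn n 0 = 0 := by
      intro n
      conv_lhs => rw [← hfn0 n]
      exact hgleft n 0 h0ball
    have hDnsub0 : ∀ n, Dn n ⊆ Dn 0 := by
      intro n
      induction n with
      | zero => exact subset_rfl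
      | succ k ih => exact (hdecr k).trans ih
    -- the comparison maps hₙ = gₙ ∘ f
    set hh : ℕ → ℂ → ℂ := fun n z => gn n (f z) with hhdef
    have hh_maps : ∀ n, Set.MapsTo (hh n) (Metric.ball 0 1) (Metric.ball 0 1) :=
      fun n z hz => hgmaps n (hsub n (hfbij.mapsTo hz))
    have hh0 : ∀ n, hh n 0 = 0 := by
      intro n
      show gn n (f 0) = 0
      rw [hf0]
      exact hgn0 n
    have hh_diff : ∀ n, DifferentiableOn ℂ (hh n) (Metric.ball 0 1) := by
      intro n z hz
      have hfz : f z ∈ Dn n := hsub n (hfbij.mapsTo hz)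
      have h1 : HasDerivAt f (deriv f z) z :=
        (hfholo.differentiableAt (Metric.isOpen_ball.mem_nhds hz)).hasDerivAt
      have h2 := hgderiv n (f z) hfz
      exact ((h2.comp z h1).differentiableAt).differentiableWithinAt
    have hh_deriv0 : ∀ n, deriv (hh n) 0 = ((r / rn n : ℝ) : ℂ) := by
      intro n
      have h1 : HasDerivAt f (deriv f 0) 0 :=
        (hfholo.differentiableAt (Metric.isOpen_ball.mem_nhds h0ball)).hasDerivAt
      have h2 := hgderiv n 0 (hDn0 n)
      rw [hgn0 n] at h2
      have h2' : HasDerivAt (gn n) ((deriv (fn n) 0)⁻¹) (f 0) := by rw [hf0]; exact h2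
      have h3 : HasDerivAt (hh n) ((deriv (fn n) 0)⁻¹ * deriv f 0) 0 := h2'.comp 0 h1
      rw [h3.deriv, hc, hcn n]
      push_cast
      ring
    set a : ℕ → ℝ := fun n => r / rn n with hadef
    have ha_pos : ∀ n, 0 < a n := fun n => div_pos hr (hrn n)
    have ha_le1 : ∀ n, a n ≤ 1 := by
      intro n
      have hm' : Set.MapsTo (hh n) (Metric.ball 0 1) (Metric.ball (hh n 0) 1) := by
        rw [hh0 n]; exact hh_maps n
      have hb := Complex.norm_deriv_le_div_of_mapsTo_ball (hh_diff n) (hm'.mono_right Metric.ball_subset_closedBall) one_pos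
      rw [hh_deriv0 n, Complex.norm_real, Real.norm_eq_abs,
        _root_.abs_of_pos (ha_pos n)] at hb
      simpa using hb
    -- radius bookkeeping
    obtain ⟨z₀, hz₀K, hz₀max⟩ := hK2.exists_isMaxOn hKne continuous_norm.continuousOn
    set ρ : ℝ := ‖z₀‖ with hρdef
    have hρ0 : 0 ≤ ρ := norm_nonneg _
    have hρ1 : ρ < 1 := by
      have := hK1 hz₀K
      rwa [Metric.mem_ball, dist_zero_right] at this
    have hmax : ∀ z ∈ K, ‖z‖ ≤ ρ := fun z hz => isMaxOn_iff.mp hz₀max z hz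
    set σ : ℝ := (1 + ρ)/2 with hσdef
    have hρσ : ρ < σ := by rw [hσdef]; linarith
    have hσ1 : σ < 1 := by rw [hσdef]; linarith
    have hσρ : 0 < σ - ρ := by linarith
    have hσ0 : 0 ≤ σ := by linarith
    -- uniform bound on fn on the ball of radius σ
    obtain ⟨ζ₀, hζ₀, hMmax⟩ := (isCompact_closedBall (0:ℂ) σ).exists_isMaxOn
      ⟨0, by simp [hσ0]⟩
      (continuous_norm.comp_continuousOn ((hfnholo 0).continuousOn.mono
        (Metric.closedBall_subset_ball hσ1)))
    set M : ℝ := ‖fn 0 ζ₀‖ with hMdef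
    have hM0 : 0 ≤ M := norm_nonneg _
    have hMle : ∀ w ∈ Metric.closedBall (0:ℂ) σ, ‖fn 0 w‖ ≤ M :=
      fun w hw => isMaxOn_iff.mp hMmax w hw
    have hfn_bound : ∀ n, ∀ ζ ∈ Metric.closedBall (0:ℂ) σ, ‖fn n ζ‖ ≤ M := by
      intro n ζ hζ
      have hζball : ζ ∈ Metric.ball (0:ℂ) 1 := Metric.closedBall_subset_ball hσ1 hζ
      set u : ℂ → ℂ := fun w => gn 0 (fn n w) with hudef
      have hu_maps : Set.MapsTo u (Metric.ball 0 1) (Metric.ball 0 1) :=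
        fun w hw => hgmaps 0 (hDnsub0 n ((hfnbij n).mapsTo hw))
      have hu_diff : DifferentiableOn ℂ u (Metric.ball 0 1) := by
        intro w hw
        have h1 : HasDerivAt (fn n) (deriv (fn n) w) w :=
          ((hfnholo n).differentiableAt (Metric.isOpen_ball.mem_nhds hw)).hasDerivAt
        have h2 := hgderiv 0 (fn n w) (hDnsub0 n ((hfnbij n).mapsTo hw))
        exact ((h2.comp w h1).differentiableAt).differentiableWithinAt
      have hu0 : u 0 = 0 := by
        show gn 0 (fn n 0) = 0
        rw [hfn0 n]
        exact hgn0 0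
      have hule := schwarz_norm_le hu_diff hu_maps hu0 hζball
      have hζσ : ‖ζ‖ ≤ σ := by rwa [Metric.mem_closedBall, dist_zero_right] at hζ
      have hmem : u ζ ∈ Metric.closedBall (0:ℂ) σ := by
        rw [Metric.mem_closedBall, dist_zero_right]
        exact le_trans hule hζσ
      have hfeq : fn 0 (u ζ) = fn n ζ :=
        hgright 0 (fn n ζ) (hDnsub0 n ((hfnbij n).mapsTo hζball))
      rw [← hfeq]
      exact hMle _ hmem
    -- derivative bound for fn on the ball of radius ρ
    set L : ℝ := (2*M+1)/(σ - ρ) with hLdef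
    have hL0 : 0 ≤ L := div_nonneg (by linarith) hσρ.le
    have hL : ∀ n, ∀ w ∈ Metric.closedBall (0:ℂ) ρ, ‖deriv (fn n) w‖ ≤ L := by
      intro n w hw
      have hwρ : ‖w‖ ≤ ρ := by rwa [Metric.mem_closedBall, dist_zero_right] at hw
      have hsubball : Metric.ball w (σ - ρ) ⊆ Metric.closedBall (0:ℂ) σ := by
        intro ζ hζ
        rw [Metric.mem_closedBall, dist_zero_right]
        have h1 : ‖ζ - w‖ < σ - ρ := by rwa [Metric.mem_ball, dist_eq_norm] at hζ
        calc ‖ζ‖ = ‖(ζ - w) + w‖ := by ring_nf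
          _ ≤ ‖ζ - w‖ + ‖w‖ := norm_add_le _ _
          _ ≤ σ := by linarith
      have hmaps : Set.MapsTo (fn n) (Metric.ball w (σ-ρ))
          (Metric.ball (fn n w) (2*M+1)) := by
        intro ζ hζ
        rw [Metric.mem_ball]
        have h1 : ‖fn n ζ‖ ≤ M := hfn_bound n ζ (hsubball hζ)
        have h2 : ‖fn n w‖ ≤ M := hfn_bound n w
          (Metric.closedBall_subset_closedBall hρσ.le hw)
        calc dist (fn n ζ) (fn n w) ≤ ‖fn n ζ‖ + ‖fn n w‖ := dist_le_norm_add_norm _ _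
          _ ≤ 2*M := by linarith
          _ < 2*M+1 := by linarith
      have hdiff : DifferentiableOn ℂ (fn n) (Metric.ball w (σ - ρ)) :=
        (hfnholo n).mono (hsubball.trans (Metric.closedBall_subset_ball hσ1))
      exact Complex.norm_deriv_le_div_of_mapsTo_ball hdiff (hmaps.mono_right Metric.ball_subset_closedBall) hσρ
    -- conformal radii converge
    have hrn_t : Tendsto rn atTop (𝓝 r) := (Complex.continuous_re.tendsto _).comp H
    have ha_t : Tendsto a atTop (𝓝 1) := by
      have h1 := Tendsto.div (tendsto_const_nhds : Tendsto (fun _ : ℕ => r) atTop (𝓝 r))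
        hrn_t hr.ne'
      rwa [div_self hr.ne'] at h1
    -- conclusion
    rw [Metric.tendstoUniformlyOn_iff]
    intro ε hε
    set C : ℝ := 1 + 2/(1-ρ) with hCdef
    have hC0 : 0 ≤ C := by
      have h1 : (0:ℝ) < 1 - ρ := by linarith
      rw [hCdef]
      positivity
    have hb_t : Tendsto (fun n => L * ((1 - a n) * C)) atTop (𝓝 0) := by
      have h1 : Tendsto (fun n => 1 - a n) atTop (𝓝 0) := by
        have := (tendsto_const_nhds : Tendsto (fun _ : ℕ => (1:ℝ)) atTop (𝓝 1)).sub ha_t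
        simpa using this
      have h2 := (h1.mul (tendsto_const_nhds : Tendsto (fun _ : ℕ => C) atTop (𝓝 C))).const_mul L
      simpa using h2
    filter_upwards [hb_t.eventually_lt_const hε] with n hn z hzK
    have hzball := hK1 hzK
    have hzρ : ‖z‖ ≤ ρ := hmax z hzK
    have hfz : f z ∈ Dn n := hsub n (hfbij.mapsTo hzball)
    have hquant : ‖hh n z - z‖ ≤ (1 - a n) * C :=
      schwarz_quant (hh_diff n) (hh_maps n) (hh0 n) (hh_deriv0 n) (ha_pos n) (ha_le1 n)
        hρ1 hzball hzρ
    have hhz_norm := schwarz_norm_le (hh_diff n) (hh_maps n) (hh0 n) hzball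
    have hz_mem : z ∈ Metric.closedBall (0:ℂ) ρ := by
      rw [Metric.mem_closedBall, dist_zero_right]; exact hzρ
    have hhz_mem : hh n z ∈ Metric.closedBall (0:ℂ) ρ := by
      rw [Metric.mem_closedBall, dist_zero_right]; exact le_trans hhz_norm hzρ
    have hdiffAt : ∀ x ∈ Metric.closedBall (0:ℂ) ρ, DifferentiableAt ℂ (fn n) x := by
      intro x hx
      refine (hfnholo n).differentiableAt (Metric.isOpen_ball.mem_nhds ?_)
      exact Metric.closedBall_subset_ball hρ1 hx
    have hlip := (convex_closedBall (0:ℂ) ρ).norm_image_sub_le_of_norm_deriv_le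
      hdiffAt (hL n) hz_mem hhz_mem
    have hfeq : fn n (hh n z) = f z := hgright n (f z) hfz
    rw [dist_eq_norm]
    have heq2 : f z - fn n z = fn n (hh n z) - fn n z := by rw [hfeq]
    rw [heq2]
    calc ‖fn n (hh n z) - fn n z‖ ≤ L * ‖hh n z - z‖ := hlip
      _ ≤ L * ((1 - a n) * C) := mul_le_mul_of_nonneg_left hquant hL0
      _ < ε := hn
end
end

section
/- Let T ∈ (0,∞], let W : [0,T) → ℝ, and let a, b : [0,T) → ℂ be differentiable functions such that for every t ∈ [0,T): Im a(t) > 0, Im b(t) > 0, a(t) ≠ b(t), a'(t) = 2/(a(t) − W(t)), and b'(t) = 2/(b(t) − W(t)). Define G(t) = log|a(t) − conj(b(t))| − log|a(t) − b(t)|. Then G is differentiable on [0,T) with G'(t) = −Im(2/(a(t) − W(t)))·Im(2/(b(t) − W(t))) for every t; in particular G'(t) < 0, so G is strictly decreasing. -/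
open Set Filter Complex
open scoped ENNReal Topology

noncomputable section

lemma hasDerivWithinAt_log_abs {f : ℝ → ℂ} {f' : ℂ} {s : Set ℝ} {t : ℝ}
    (hf : HasDerivWithinAt f f' s t) (h0 : f t ≠ 0) :
    HasDerivWithinAt (fun u => Real.log ‖f u‖) ((f' / f t).re) s t := by
  have hre : HasDerivWithinAt (fun u => (f u).re) f'.re s t :=
    (Complex.reCLM.hasFDerivAt.comp_hasDerivWithinAt t hf)
  have him : HasDerivWithinAt (fun u => (f u).im) f'.im s t :=
    (Complex.imCLM.hasFDerivAt.comp_hasDerivWithinAt t hf)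
  have hN : HasDerivWithinAt (fun u => (f u).re * (f u).re + (f u).im * (f u).im)
      (f'.re * (f t).re + (f t).re * f'.re + (f'.im * (f t).im + (f t).im * f'.im)) s t :=
    (hre.mul hre).add (him.mul him)
  have hN0 : (f t).re * (f t).re + (f t).im * (f t).im ≠ 0 := by
    have := Complex.normSq_pos.mpr h0
    rw [Complex.normSq_apply] at this
    exact ne_of_gt this
  have hlog := (hN.log hN0).div_const 2
  have heq : ∀ u, Real.log ‖f u‖ =
      Real.log ((f u).re * (f u).re + (f u).im * (f u).im) / 2 := by
    intro u
    rw [Complex.norm_def, Real.log_sqrt (Complex.normSq_nonneg _), Complex.normSq_apply]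
  have := hlog.congr (fun x _ => heq x) (heq t)
  refine this.congr_deriv (Eq.symm ?_)
  rw [Complex.div_re, Complex.normSq_apply]
  field_simp
  ring

/-- The Green's function computation for the chordal Loewner chain: if `a` and `b` solve
the chordal Loewner ODE on `[0,T)` with driving function `W`, stay in the upper
half-plane, and never collide, then
`G(t) = log|a(t) − conj(b(t))| − log|a(t) − b(t)|` is differentiable with
`G'(t) = −Im(2/(a(t) − W(t)))·Im(2/(b(t) − W(t))) < 0`; in particular `G` is strictly
decreasing. -/
theorem loewner_green_function_derivative
    (T : ℝ≥0∞) (hT : 0 < T)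
    (S : Set ℝ) (hS : S = {t : ℝ | 0 ≤ t ∧ ENNReal.ofReal t < T})
    (W : ℝ → ℝ) (a b : ℝ → ℂ)
    (haim : ∀ t ∈ S, 0 < (a t).im)
    (hbim : ∀ t ∈ S, 0 < (b t).im)
    (hab : ∀ t ∈ S, a t ≠ b t)
    (ha : ∀ t ∈ S, HasDerivWithinAt a (2 / (a t - (W t : ℂ))) S t)
    (hb : ∀ t ∈ S, HasDerivWithinAt b (2 / (b t - (W t : ℂ))) S t)
    (G : ℝ → ℝ)
    (hG : ∀ t : ℝ, G t =
      Real.log ‖a t - (starRingEnd ℂ) (b t)‖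
        - Real.log ‖a t - b t‖) :
    (∀ t ∈ S,
      HasDerivWithinAt G
        (-((2 / (a t - (W t : ℂ))).im * (2 / (b t - (W t : ℂ))).im)) S t ∧
      -((2 / (a t - (W t : ℂ))).im * (2 / (b t - (W t : ℂ))).im) < 0) ∧
    StrictAntiOn G S := by
  have key : ∀ t ∈ S,
      HasDerivWithinAt G
        (-((2 / (a t - (W t : ℂ))).im * (2 / (b t - (W t : ℂ))).im)) S t ∧
      -((2 / (a t - (W t : ℂ))).im * (2 / (b t - (W t : ℂ))).im) < 0 := by
    intro t ht
    set A : ℂ := a t - (W t : ℂ) with hAdef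
    set B : ℂ := b t - (W t : ℂ) with hBdef
    have hA : A ≠ 0 := by
      have h0 : 0 < A.im := by simpa [hAdef] using haim t ht
      intro h; rw [h] at h0; simp at h0
    have hB : B ≠ 0 := by
      have h0 : 0 < B.im := by simpa [hBdef] using hbim t ht
      intro h; rw [h] at h0; simp at h0
    have hBc : (starRingEnd ℂ) B ≠ 0 := by simpa using hB
    have hu : a t - (starRingEnd ℂ) (b t) ≠ 0 := by
      intro h
      have : (a t - (starRingEnd ℂ) (b t)).im = 0 := by rw [h]; simp
      rw [Complex.sub_im, Complex.conj_im] at this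
      have := haim t ht; have := hbim t ht
      linarith
    have hv : a t - b t ≠ 0 := sub_ne_zero.mpr (hab t ht)
    have e0 : a t - (starRingEnd ℂ) (b t) = A - (starRingEnd ℂ) B := by
      rw [hAdef, hBdef, map_sub, Complex.conj_ofReal]; ring
    have e0' : a t - b t = A - B := by rw [hAdef, hBdef]; ring
    have huAB : A - (starRingEnd ℂ) B ≠ 0 := e0 ▸ hu
    have hvAB : A - B ≠ 0 := e0' ▸ hv
    -- derivatives
    have hbc : HasDerivWithinAt (fun u => (starRingEnd ℂ) (b u)) ((starRingEnd ℂ) (2 / B)) S t := by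
      have h := (hb t ht).star
      simp only [Complex.star_def] at h
      exact h
    have hf1 : HasDerivWithinAt (fun u => a u - (starRingEnd ℂ) (b u))
        (2 / A - (starRingEnd ℂ) (2 / B)) S t := (ha t ht).sub hbc
    have hf2 : HasDerivWithinAt (fun u => a u - b u) (2 / A - 2 / B) S t :=
      (ha t ht).sub (hb t ht)
    have h1 := hasDerivWithinAt_log_abs hf1 hu
    have h2 := hasDerivWithinAt_log_abs hf2 hv
    have hDG := (h1.sub h2).congr (fun x _ => hG x) (hG t)
    -- identify the derivative value
    have e1 : (2 / A - (starRingEnd ℂ) (2 / B)) / (A - (starRingEnd ℂ) B)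
        = -((2 / A) * (starRingEnd ℂ) (2 / B)) / 2 := by
      rw [map_div₀]
      simp only [map_ofNat]
      field_simp
      ring
    have e2 : (2 / A - 2 / B) / (A - B) = -((2 / A) * (2 / B)) / 2 := by
      field_simp
      ring
    have hval : ((2 / A - (starRingEnd ℂ) (2 / B)) / (a t - (starRingEnd ℂ) (b t))).re
        - ((2 / A - 2 / B) / (a t - b t)).re
        = -((2 / A).im * (2 / B).im) := by
      rw [e0, e0', e1, e2]
      set α := 2 / A
      set β := 2 / B
      simp [Complex.div_re, Complex.mul_re, Complex.mul_im, Complex.normSq_apply]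
      ring
    have him : (2 / A).im < 0 := by
      rw [Complex.div_im]
      have hn : 0 < Complex.normSq A := Complex.normSq_pos.mpr hA
      have hAim : 0 < A.im := by
        simp [hAdef, Complex.sub_im]; exact haim t ht
      have : (2 : ℂ).im = 0 := by simp
      rw [this]
      simp only [zero_mul, zero_div, zero_sub]
      have h2re : (2:ℂ).re = 2 := by simp
      rw [h2re]
      have : 0 < 2 * A.im / Complex.normSq A := by positivity
      linarith
    have him' : (2 / B).im < 0 := by
      rw [Complex.div_im]
      have hn : 0 < Complex.normSq B := Complex.normSq_pos.mpr hB
      have hBim : 0 < B.im := by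
        simp [hBdef, Complex.sub_im]; exact hbim t ht
      have : (2 : ℂ).im = 0 := by simp
      rw [this]
      simp only [zero_mul, zero_div, zero_sub]
      have h2re : (2:ℂ).re = 2 := by simp
      rw [h2re]
      have : 0 < 2 * B.im / Complex.normSq B := by positivity
      linarith
    refine ⟨?_, by nlinarith [mul_pos_of_neg_of_neg him him']⟩
    rw [← hval]
    exact hDG
  refine ⟨key, ?_⟩
  have hconv : Convex ℝ S := by
    apply Set.OrdConnected.convex
    constructor
    intro x hx y hy z hz
    rw [hS] at hx hy ⊢
    exact ⟨le_trans hx.1 hz.1, lt_of_le_of_lt (ENNReal.ofReal_le_ofReal hz.2) hy.2⟩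
  apply strictAntiOn_of_deriv_neg hconv
  · exact fun t ht => ((key t ht).1).continuousWithinAt
  · intro x hx
    have hxS : x ∈ S := interior_subset hx
    have hd := (key x hxS).1
    have : HasDerivAt G (-((2 / (a x - (W x : ℂ))).im * (2 / (b x - (W x : ℂ))).im)) x :=
      hd.hasDerivAt (mem_interior_iff_mem_nhds.mp hx)
    rw [this.deriv]
    exact (key x hxS).2
end
end

section
/- Let T ∈ (0,∞], let W : [0,T) → ℝ, and let a, b : [0,T) → ℂ be differentiable functions such that for every t ∈ [0,T): Im a(t) > 0, b(t) ≠ 0, a'(t) = 2/(a(t) − W(t)), and b'(t) = −2·b(t)/(a(t) − W(t))². Define C(t) = log(2·Im a(t)) − log|b(t)|. Then C is differentiable on [0,T) with C'(t) = −(Im(2/(a(t) − W(t))))² for every t; in particular C is strictly decreasing. -/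
open Set Filter Complex
open scoped ENNReal Topology

noncomputable section

/-- The conformal radius computation for the chordal Loewner chain: if `a` solves the
chordal Loewner ODE on `[0,T)` with driving function `W` and stays in the upper
half-plane, and `b` solves the variational equation `b' = −2b/(a − W)²` with `b ≠ 0`,
then `C(t) = log(2·Im a(t)) − log|b(t)|` (the log conformal radius) is differentiable
with `C'(t) = −(Im(2/(a(t) − W(t))))²`; in particular `C` is strictly decreasing. -/
theorem loewner_log_conformal_radius_derivative
    (T : ℝ≥0∞) (hT : 0 < T)
    (S : Set ℝ) (hS : S = {t : ℝ | 0 ≤ t ∧ ENNReal.ofReal t < T})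
    (W : ℝ → ℝ) (a b : ℝ → ℂ)
    (haim : ∀ t ∈ S, 0 < (a t).im)
    (hbne : ∀ t ∈ S, b t ≠ 0)
    (ha : ∀ t ∈ S, HasDerivWithinAt a (2 / (a t - (W t : ℂ))) S t)
    (hb : ∀ t ∈ S,
      HasDerivWithinAt b (-2 * b t / (a t - (W t : ℂ)) ^ 2) S t)
    (C : ℝ → ℝ)
    (hC : ∀ t : ℝ, C t =
      Real.log (2 * (a t).im) - Real.log ‖b t‖) :
    (∀ t ∈ S,
      HasDerivWithinAt C (-((2 / (a t - (W t : ℂ))).im) ^ 2) S t) ∧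
    StrictAntiOn C S := by
  -- S is convex
  have hSconv : Convex ℝ S := by
    rcases eq_or_ne T ⊤ with hTt | hTt
    · have hSI : S = Ici (0 : ℝ) := by
        ext t; simp [hS, hTt]
      rw [hSI]; exact convex_Ici 0
    · have hSI : S = Ico (0 : ℝ) T.toReal := by
        ext t
        simp only [hS, mem_setOf_eq, mem_Ico]
        exact and_congr_right fun h0 => ENNReal.ofReal_lt_iff_lt_toReal h0 hTt
      rw [hSI]; exact convex_Ico _ _
  -- negativity of the imaginary part of 2/z
  have him_neg : ∀ t ∈ S, ((2 : ℂ) / (a t - (W t : ℂ))).im < 0 := by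
    intro t ht
    have hy : 0 < (a t).im := haim t ht
    have hzim : (a t - (W t : ℂ)).im = (a t).im := by simp
    have hz0 : (a t - (W t : ℂ)) ≠ 0 := by
      intro h
      rw [h] at hzim
      simp at hzim
      linarith
    have hns : 0 < Complex.normSq (a t - (W t : ℂ)) := normSq_pos.mpr hz0
    rw [Complex.div_im, hzim]
    have h2im : (2:ℂ).im = 0 := rfl
    have h2re : (2:ℂ).re = 2 := rfl
    rw [h2im, h2re, zero_mul, zero_div]
    have hpos : (0:ℝ) < 2 * (a t).im / Complex.normSq (a t - (W t : ℂ)) := by positivity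
    linarith
  have key : ∀ t ∈ S,
      HasDerivWithinAt C (-((2 / (a t - (W t : ℂ))).im) ^ 2) S t := by
    intro t ht
    have hy : 0 < (a t).im := haim t ht
    have hb0 : b t ≠ 0 := hbne t ht
    have hzim : (a t - (W t : ℂ)).im = (a t).im := by simp
    have hz0 : (a t - (W t : ℂ)) ≠ 0 := by
      intro h; rw [h] at hzim; simp at hzim; linarith
    have hns : 0 < Complex.normSq (a t - (W t : ℂ)) := normSq_pos.mpr hz0
    -- derivative of the first part
    have h1 : HasDerivWithinAt (fun t => (a t).im)
        ((2 / (a t - (W t : ℂ))).im) S t :=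
      Complex.imCLM.hasFDerivAt.comp_hasDerivWithinAt t (ha t ht)
    have h2 : HasDerivWithinAt (fun t => 2 * (a t).im)
        (2 * (2 / (a t - (W t : ℂ))).im) S t := h1.const_mul 2
    have h2ne : 2 * (a t).im ≠ 0 := by positivity
    have h3 : HasDerivWithinAt (fun t => Real.log (2 * (a t).im))
        ((2 * (a t).im)⁻¹ * (2 * (2 / (a t - (W t : ℂ))).im)) S t :=
      (Real.hasDerivAt_log h2ne).comp_hasDerivWithinAt (h := fun t => 2 * (a t).im) t h2
    -- derivative of the second part via normSq
    have hre : HasDerivWithinAt (fun t => (b t).re)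
        ((-2 * b t / (a t - (W t : ℂ)) ^ 2).re) S t :=
      Complex.reCLM.hasFDerivAt.comp_hasDerivWithinAt t (hb t ht)
    have him : HasDerivWithinAt (fun t => (b t).im)
        ((-2 * b t / (a t - (W t : ℂ)) ^ 2).im) S t :=
      Complex.imCLM.hasFDerivAt.comp_hasDerivWithinAt t (hb t ht)
    have hN : HasDerivWithinAt (fun t => (b t).re ^ 2 + (b t).im ^ 2)
        (2 * (b t).re ^ 1 * (-2 * b t / (a t - (W t : ℂ)) ^ 2).re
          + 2 * (b t).im ^ 1 * (-2 * b t / (a t - (W t : ℂ)) ^ 2).im) S t :=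
      (hre.pow 2).add (him.pow 2)
    have hNpos : 0 < (b t).re ^ 2 + (b t).im ^ 2 := by
      have := Complex.normSq_pos.mpr hb0
      rw [Complex.normSq_apply] at this
      nlinarith
    have hlogN : HasDerivWithinAt (fun t => Real.log ((b t).re ^ 2 + (b t).im ^ 2) / 2)
        ((((b t).re ^ 2 + (b t).im ^ 2)⁻¹ *
          (2 * (b t).re ^ 1 * (-2 * b t / (a t - (W t : ℂ)) ^ 2).re
          + 2 * (b t).im ^ 1 * (-2 * b t / (a t - (W t : ℂ)) ^ 2).im)) / 2) S t :=
      ((Real.hasDerivAt_log (ne_of_gt hNpos)).comp_hasDerivWithinAt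
        (h := fun t => (b t).re ^ 2 + (b t).im ^ 2) t hN).div_const 2
    -- rewrite C
    have hCeq : C = fun t => Real.log (2 * (a t).im)
        - Real.log ((b t).re ^ 2 + (b t).im ^ 2) / 2 := by
      funext s
      rw [hC s]
      congr 1
      rw [Complex.norm_def, Real.log_sqrt (Complex.normSq_nonneg _), Complex.normSq_apply]
      ring_nf
    rw [hCeq]
    have hD := h3.sub hlogN
    convert hD using 1
    case e'_4 => rfl
    case e'_5 => rfl
    case e'_8 => rfl
    -- algebraic identity
    set x := (a t - (W t : ℂ)).re with hx
    set y := (a t).im with hyy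
    have hzre : (a t - (W t : ℂ)).im = y := hzim
    have hnsxy : Complex.normSq (a t - (W t : ℂ)) = x ^ 2 + y ^ 2 := by
      rw [Complex.normSq_apply, ← hx, hzre]; ring
    have hxy : (0:ℝ) < x ^ 2 + y ^ 2 := by rw [← hnsxy]; exact hns
    -- express the complex quantities in terms of x, y
    have hbterm : -2 * b t / (a t - (W t : ℂ)) ^ 2
        = (-2 / (a t - (W t : ℂ)) ^ 2) * b t := by ring
    have hdiv_im : ((2 : ℂ) / (a t - (W t : ℂ))).im = -(2 * y) / (x ^ 2 + y ^ 2) := by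
      rw [Complex.div_im, hnsxy, ← hx, hzre]
      norm_num
      ring
    have hsq : ((a t - (W t : ℂ)) ^ 2).re = x ^ 2 - y ^ 2 ∧
        ((a t - (W t : ℂ)) ^ 2).im = 2 * x * y := by
      constructor
      · rw [pow_two, Complex.mul_re, ← hx, hzre]; ring
      · rw [pow_two, Complex.mul_im, ← hx, hzre]; ring
    have hnssq : Complex.normSq ((a t - (W t : ℂ)) ^ 2) = (x ^ 2 + y ^ 2) ^ 2 := by
      rw [Complex.normSq_apply, hsq.1, hsq.2]; ring
    have hcre : ((-2 : ℂ) / (a t - (W t : ℂ)) ^ 2).re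
        = -2 * (x ^ 2 - y ^ 2) / (x ^ 2 + y ^ 2) ^ 2 := by
      rw [Complex.div_re, hnssq, hsq.1, hsq.2]
      norm_num
    rw [hbterm, Complex.mul_re, Complex.mul_im, hdiv_im, hcre]
    have hcim : ((-2 : ℂ) / (a t - (W t : ℂ)) ^ 2).im
        = -(-2 * (2 * x * y)) / (x ^ 2 + y ^ 2) ^ 2 := by
      rw [Complex.div_im, hnssq, hsq.1, hsq.2]
      norm_num
      ring
    rw [hcim]
    field_simp
    ring
  refine ⟨key, ?_⟩
  have hcont : ContinuousOn C S := fun t ht => (key t ht).continuousWithinAt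
  apply strictAntiOn_of_deriv_neg hSconv hcont
  intro x hx
  have hxS : x ∈ S := interior_subset hx
  have hmem : S ∈ 𝓝 x := mem_interior_iff_mem_nhds.mp hx
  have hda := (key x hxS).hasDerivAt hmem
  rw [hda.deriv]
  have h := him_neg x hxS
  nlinarith [h]
end
end
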